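/- arXiv:2409.18667 — 2 statements merged into one kernel-verified Lean document; each statement's English description precedes it below -/
import Mathlib

section
/- TeamCTL is sensitive to multiplicities: there exist a finite Kripke structure 𝒦, a CTL formula φ, and two teams T, T' of 𝒦 with the same support (the same underlying set of worlds) such that 𝒦, T ⊨ φ but 𝒦, T' ⊭ φ. (A witness is a world w that branches into two chains, one with p at its first world and one with p at its second world, φ = A[(p∨¬p)Up] (i.e., AF p), T = ⟦w⟧ and T' = ⟦w, w⟧.) -/
namespace TeamCTL

/-- A Kripke structure: a finite set of worlds, a left-total transition relation,
and a labeling function. -/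
structure Kripke (AP : Type) where
  W : Type
  [instFin : Fintype W]
  R : W → W → Prop
  leftTotal : ∀ w : W, ∃ w' : W, R w w'
  η : W → Set AP

attribute [instance] Kripke.instFin

/-- CTL formulae in negation normal form. -/
inductive CTL (AP : Type) : Type
  | atom : AP → CTL AP
  | natom : AP → CTL AP
  | conj : CTL AP → CTL AP → CTL AP
  | disj : CTL AP → CTL AP → CTL AP
  | ex : CTL AP → CTL AP
  | ax : CTL AP → CTL AP
  | eu : CTL AP → CTL AP → CTL AP
  | au : CTL AP → CTL AP → CTL AP
  | er : CTL AP → CTL AP → CTL AP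
  | ar : CTL AP → CTL AP → CTL AP

variable {AP : Type}

/-- `π` is a path of `K` starting at the world `w`. -/
def IsPathFrom (K : Kripke AP) (w : K.W) (π : ℕ → K.W) : Prop :=
  π 0 = w ∧ ∀ i : ℕ, K.R (π i) (π (i + 1))

/-- A team of `K` is a finite multiset of worlds, represented as a list
(the positions of the list play the role of the indices of the indexed multiset;
multiset equality is list permutation).  A `T`-compatible function assigns to
each (indexed) element of the team a path starting at that world. -/
def Compatible (K : Kripke AP) (T : List K.W) (f : Fin T.length → ℕ → K.W) : Prop :=
  ∀ i : Fin T.length, IsPathFrom K (T.get i) (f i)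

/-- `T[f,n]`: the team obtained by synchronously proceeding to the `n`-th element
of each chosen path. -/
def step (K : Kripke AP) {T : List K.W} (f : Fin T.length → ℕ → K.W) (n : ℕ) : List K.W :=
  List.ofFn fun i => f i n

/-- Team semantics for CTL: `TSat K φ T` means `K, T ⊨ φ`. -/
def TSat (K : Kripke AP) : CTL AP → List K.W → Prop
  | .atom p, T => ∀ w ∈ T, p ∈ K.η w
  | .natom p, T => ∀ w ∈ T, p ∉ K.η w
  | .conj φ ψ, T => TSat K φ T ∧ TSat K ψ T
  | .disj φ ψ, T => ∃ T₁ T₂ : List K.W, (T₁ ++ T₂).Perm T ∧ TSat K φ T₁ ∧ TSat K ψ T₂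
  | .ex φ, T => ∃ f, Compatible K T f ∧ TSat K φ (step K f 1)
  | .ax φ, T => ∀ f, Compatible K T f → TSat K φ (step K f 1)
  | .eu φ ψ, T => ∃ f, Compatible K T f ∧ ∃ k : ℕ,
      TSat K ψ (step K f k) ∧ ∀ j : ℕ, 1 ≤ j → j < k → TSat K φ (step K f j)
  | .au φ ψ, T => ∀ f, Compatible K T f → ∃ k : ℕ,
      TSat K ψ (step K f k) ∧ ∀ j : ℕ, 1 ≤ j → j < k → TSat K φ (step K f j)
  | .er φ ψ, T => ∃ f, Compatible K T f ∧ ∀ k : ℕ,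
      TSat K ψ (step K f k) ∨ ∃ j : ℕ, 1 ≤ j ∧ j < k ∧ TSat K φ (step K f j)
  | .ar φ ψ, T => ∀ f, Compatible K T f → ∀ k : ℕ,
      TSat K ψ (step K f k) ∨ ∃ j : ℕ, 1 ≤ j ∧ j < k ∧ TSat K φ (step K f j)

/-- Classical (pointed) semantics for CTL: `CSat K φ w` means `K, w ⊨ φ`. -/
def CSat (K : Kripke AP) : CTL AP → K.W → Prop
  | .atom p, w => p ∈ K.η w
  | .natom p, w => p ∉ K.η w
  | .conj φ ψ, w => CSat K φ w ∧ CSat K ψ w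
  | .disj φ ψ, w => CSat K φ w ∨ CSat K ψ w
  | .ex φ, w => ∃ π, IsPathFrom K w π ∧ CSat K φ (π 1)
  | .ax φ, w => ∀ π, IsPathFrom K w π → CSat K φ (π 1)
  | .eu φ ψ, w => ∃ π, IsPathFrom K w π ∧ ∃ k : ℕ, CSat K ψ (π k) ∧ ∀ j < k, CSat K φ (π j)
  | .au φ ψ, w => ∀ π, IsPathFrom K w π → ∃ k : ℕ, CSat K ψ (π k) ∧ ∀ j < k, CSat K φ (π j)
  | .er φ ψ, w => ∃ π, IsPathFrom K w π ∧ ∀ k : ℕ, CSat K ψ (π k) ∨ ∃ j < k, CSat K φ (π j)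
  | .ar φ ψ, w => ∀ π, IsPathFrom K w π → ∀ k : ℕ, CSat K ψ (π k) ∨ ∃ j < k, CSat K φ (π j)

/-- `EF φ := E[(p ∨ ¬p) U φ]`. -/
def EF (p : AP) (φ : CTL AP) : CTL AP := .eu (.disj (.atom p) (.natom p)) φ

/-! A single world `0` branches into two chains: along one the proposition `p` holds only at
time `1`, along the other only at time `2`.  Every single path from `0` therefore meets `p`,
so the team `[0]` satisfies `AF p`.  The team `[0, 0]` may send its two copies of `0` along
different chains, and then there is no common time at which both are at a `p`-world. -/

def AF (p : AP) (φ : CTL AP) : CTL AP := .au (.disj (.atom p) (.natom p)) φ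

section General

variable (K : Kripke AP)

theorem tSat_atom_singleton (p : AP) (w : K.W) : TSat K (.atom p) [w] ↔ p ∈ K.η w := by
  simp [TSat]

theorem tSat_atom_pair (p : AP) (v w : K.W) :
    TSat K (.atom p) [v, w] ↔ p ∈ K.η v ∧ p ∈ K.η w := by
  simp [TSat]

/-- Split a team into its `p`-worlds and its `¬p`-worlds. -/
theorem tSat_disj_atom_natom (p : AP) (T : List K.W) :
    TSat K (.disj (.atom p) (.natom p)) T := by
  classical
  refine ⟨T.filter (p ∈ K.η ·), T.filter (p ∉ K.η ·), ?_, ?_, ?_⟩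
  · simpa using List.filter_append_perm (fun w => decide (p ∈ K.η w)) T
  · intro w hw
    simpa using (List.mem_filter.mp hw).2
  · intro w hw
    simpa using (List.mem_filter.mp hw).2

theorem tSat_AF_iff (p : AP) (φ : CTL AP) (T : List K.W) :
    TSat K (AF p φ) T ↔ ∀ f, Compatible K T f → ∃ k, TSat K φ (step K f k) := by
  refine forall₂_congr fun f _ => exists_congr fun k => and_iff_left_iff_imp.mpr ?_
  exact fun _ _ _ _ => tSat_disj_atom_natom K p _

theorem tSat_AF_atom_singleton_iff (p q : AP) (w : K.W) :
    TSat K (AF p (.atom q)) [w] ↔ ∀ π, IsPathFrom K w π → ∃ k, q ∈ K.η (π k) := by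
  rw [tSat_AF_iff]
  constructor
  · intro h π hπ
    obtain ⟨k, hk⟩ := h (fun _ => π) fun | ⟨0, _⟩ => hπ
    exact ⟨k, (tSat_atom_singleton K q _).mp hk⟩
  · intro h f hf
    obtain ⟨k, hk⟩ := h _ (hf 0)
    exact ⟨k, (tSat_atom_singleton K q _).mpr hk⟩

theorem exists_common_time_of_tSat_AF_atom_pair {p q : AP} {v w : K.W}
    (h : TSat K (AF p (.atom q)) [v, w]) {π₁ π₂ : ℕ → K.W}
    (hπ₁ : IsPathFrom K v π₁) (hπ₂ : IsPathFrom K w π₂) :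
    ∃ k, q ∈ K.η (π₁ k) ∧ q ∈ K.η (π₂ k) := by
  let f : Fin 2 → ℕ → K.W := ![π₁, π₂]
  have hf : Compatible K [v, w] f := fun i => by fin_cases i <;> assumption
  obtain ⟨k, hk⟩ := (tSat_AF_iff K p _ _).mp h f hf
  exact ⟨k, (tSat_atom_pair K q _ _).mp hk⟩

end General

abbrev twoChains : Kripke ℕ where
  W := Fin 5
  R i j := (i, j) ∈ ({(0, 1), (1, 2), (2, 2), (0, 3), (3, 4), (4, 4)} : Finset (Fin 5 × Fin 5))
  leftTotal := by decide
  η w := {n | n = 0 ∧ (w = 1 ∨ w = 4)}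

def upperChain : ℕ → twoChains.W
  | 0 => 0
  | 1 => 1
  | _ + 2 => 2

def lowerChain : ℕ → twoChains.W
  | 0 => 0
  | 1 => 3
  | _ + 2 => 4

theorem isPathFrom_upperChain : IsPathFrom twoChains 0 upperChain :=
  ⟨rfl, fun | 0 => by decide | 1 => by decide | _ + 2 => (by decide : twoChains.R 2 2)⟩

theorem isPathFrom_lowerChain : IsPathFrom twoChains 0 lowerChain :=
  ⟨rfl, fun | 0 => by decide | 1 => by decide | _ + 2 => (by decide : twoChains.R 4 4)⟩

theorem twoChains_exists_p_of_isPathFrom_zero {π : ℕ → twoChains.W}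
    (hπ : IsPathFrom twoChains 0 π) : ∃ k, 0 ∈ twoChains.η (π k) := by
  have two_steps : ∀ a b : twoChains.W, twoChains.R 0 a → twoChains.R a b →
      0 ∈ twoChains.η a ∨ 0 ∈ twoChains.η b := by decide
  have h01 := hπ.2 0
  rw [hπ.1] at h01
  rcases two_steps _ _ h01 (hπ.2 1) with h | h
  exacts [⟨1, h⟩, ⟨2, h⟩]

theorem twoChains_not_p_upper_and_lower :
    ∀ k, ¬ (0 ∈ twoChains.η (upperChain k) ∧ 0 ∈ twoChains.η (lowerChain k))
  | 0 => by decide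
  | 1 => by decide
  | _ + 2 => fun h => (by decide : 0 ∉ twoChains.η 2) h.1

/-- TeamCTL is sensitive to multiplicities: there are a finite
Kripke structure `𝒦`, a CTL formula `φ`, and teams `T, T'` with the same
support such that `𝒦,T ⊨ φ` but `𝒦,T' ⊭ φ`. -/
theorem sensitive_to_multiplicities :
    ∃ (K : Kripke ℕ) (φ : CTL ℕ) (T T' : List K.W),
      (∀ w : K.W, w ∈ T ↔ w ∈ T') ∧ TSat K φ T ∧ ¬ TSat K φ T' := by
  refine ⟨twoChains, AF 0 (.atom 0), [0], [0, 0], by simp, ?_, fun h => ?_⟩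
  · exact (tSat_AF_atom_singleton_iff _ _ _ _).mpr fun _ => twoChains_exists_p_of_isPathFrom_zero
  · obtain ⟨k, hk⟩ := exists_common_time_of_tSat_AF_atom_pair _ h
      isPathFrom_upperChain isPathFrom_lowerChain
    exact twoChains_not_p_upper_and_lower k hk

end TeamCTL
end

section
/- The team-semantics class of EF p is not definable in classical multiset semantics: there is no CTL formula φ such that for every finite Kripke structure 𝒦 and every team T of 𝒦, (𝒦, w ⊨ φ under classical CTL semantics for all w ∈ T) holds if and only if 𝒦, T ⊨ EF p under team semantics, where EF p := E[(p∨¬p) U p]. -/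
/-!
Classical multiset semantics is flat, so every class of teams it defines is closed under
multiset union. The team class of `EF p` is not: in the two-world structure whose worlds
alternate and where `p` holds at just one of them, each singleton team reaches `p`, but the
team of both worlds never has both of its synchronous paths in `p` at the same time.
-/

namespace TeamCTL

variable {AP : Type}

def ClassicallyDefines (φ ψ : CTL AP) : Prop :=
  ∀ (K : Kripke AP) (T : List K.W), (∀ w ∈ T, CSat K φ w) ↔ TSat K ψ T

theorem ClassicallyDefines.tSat_append {φ ψ : CTL AP} (h : ClassicallyDefines φ ψ)
    {K : Kripke AP} {T₁ T₂ : List K.W} (h₁ : TSat K ψ T₁) (h₂ : TSat K ψ T₂) :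
    TSat K ψ (T₁ ++ T₂) := by
  rw [← h] at h₁ h₂ ⊢
  exact List.forall_mem_append.2 ⟨h₁, h₂⟩

theorem tSat_atom_or_natom (K : Kripke AP) (p : AP) (T : List K.W) :
    TSat K (.disj (.atom p) (.natom p)) T := by
  classical
  refine ⟨_, _, List.filter_append_perm (fun w => decide (p ∈ K.η w)) T, ?_, ?_⟩ <;>
    simp [TSat]

theorem tSat_EF_atom_iff (K : Kripke AP) (p : AP) (T : List K.W) :
    TSat K (EF p (.atom p)) T ↔
      ∃ f, Compatible K T f ∧ ∃ k, ∀ w ∈ step K f k, p ∈ K.η w := by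
  constructor
  · rintro ⟨f, hf, k, hk, -⟩
    exact ⟨f, hf, k, hk⟩
  · rintro ⟨f, hf, k, hk⟩
    exact ⟨f, hf, k, hk, fun j _ _ => tSat_atom_or_natom K p _⟩

abbrev Kripke.ofFun {W : Type} [Fintype W] (next : W → W) (η : W → Set AP) : Kripke AP where
  W := W
  R w w' := w' = next w
  leftTotal w := ⟨next w, rfl⟩
  η := η

section ofFun

variable {W : Type} [Fintype W] (next : W → W) (η : W → Set AP)

theorem isPathFrom_ofFun_iff (w : W) (π : ℕ → W) :
    IsPathFrom (Kripke.ofFun next η) w π ↔ π = fun n => next^[n] w := by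
  constructor
  · rintro ⟨h₀, hsucc⟩
    funext n
    induction n with
    | zero => exact h₀
    | succ n ih => rw [hsucc n, ih, Function.iterate_succ_apply']
  · rintro rfl
    exact ⟨rfl, fun n => Function.iterate_succ_apply' next n w⟩

theorem tSat_EF_atom_ofFun_iff (p : AP) (T : List W) :
    TSat (Kripke.ofFun next η) (EF p (.atom p)) T ↔ ∃ k, ∀ w ∈ T, p ∈ η (next^[k] w) := by
  have hcompat (f : Fin T.length → ℕ → W) :
      Compatible (Kripke.ofFun next η) T f ↔ f = fun i n => next^[n] (T.get i) := by
    simp only [Compatible, isPathFrom_ofFun_iff, funext_iff]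
  simp only [tSat_EF_atom_iff, hcompat, exists_eq_left, step, List.forall_mem_ofFn_iff,
    List.forall_mem_iff_get]

end ofFun

abbrev flipFlop (p : AP) : Kripke AP :=
  Kripke.ofFun (W := Bool) not fun b => if b then {p} else ∅

/-- The team-semantics class of `EF p` is not definable in
classical multiset semantics: no CTL formula `φ` satisfies, for every finite
Kripke structure `𝒦` and every team `T`,
`(∀ w ∈ T, 𝒦,w ⊨ φ) ↔ 𝒦,T ⊨ EF p`. -/
theorem ef_not_classically_definable (p : ℕ) :
    ¬ ∃ φ : CTL ℕ, ∀ (K : Kripke ℕ) (T : List K.W),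
        (∀ w ∈ T, CSat K φ w) ↔ TSat K (EF p (.atom p)) T := by
  rintro ⟨φ, hφ⟩
  have hsat (T : List Bool) :
      TSat (flipFlop p) (EF p (.atom p)) T ↔ ∃ k, ∀ b ∈ T, not^[k] b = true := by
    simp [tSat_EF_atom_ofFun_iff]
  have htrue : TSat (flipFlop p) (EF p (.atom p)) [true] := (hsat _).2 ⟨0, by simp⟩
  have hfalse : TSat (flipFlop p) (EF p (.atom p)) [false] := (hsat _).2 ⟨1, by simp⟩
  obtain ⟨k, hk⟩ := (hsat _).1 (ClassicallyDefines.tSat_append hφ htrue hfalse)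
  exact Bool.false_ne_true <| Bool.not_injective.iterate k <|
    (hk false (by simp)).trans (hk true (by simp)).symm

end TeamCTL
end
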